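/- In the value substitution calculus, the multiplicative reduction →m and the exponential reduction →e are each strongly confluent. -/
import Mathlib


/-- Terms of the value substitution calculus, in de Bruijn notation:
variables, abstractions, applications and explicit substitutions
(`sub t u` is `t[x←u]`, binding de Bruijn index 0 of `t`). -/
inductive VTm : Type
  | var : Nat → VTm
  | lam : VTm → VTm
  | app : VTm → VTm → VTm
  | sub : VTm → VTm → VTm

namespace VTm

/-- Shift (by one) the free de Bruijn indices `≥ k`. -/
def shift (k : Nat) : VTm → VTm
  | var n => if k ≤ n then var (n+1) else var n
  | lam t => lam (shift (k+1) t)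
  | app t u => app (shift k t) (shift k u)
  | sub t u => sub (shift (k+1) t) (shift k u)

/-- Capture-avoiding (meta-level) substitution of `u` for variable `k`. -/
def subst : VTm → Nat → VTm → VTm
  | var n, k, u => if n = k then u else if k < n then var (n-1) else var n
  | lam t, k, u => lam (subst t (k+1) (shift 0 u))
  | app t s, k, u => app (subst t k u) (subst s k u)
  | sub t s, k, u => sub (subst t (k+1) (shift 0 u)) (subst s k u)

/-- vsub-values: variables and abstractions. -/
inductive IsVal : VTm → Prop
  | var : IsVal (var n)
  | lam : IsVal (lam t)

/-- Multiplicative root rule `L⟨λx.t⟩u ↦m L⟨t[x←u]⟩` (the recursion on the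
substitution context `L` performs the de Bruijn shifts corresponding to the
side condition that the variables bound by `L` do not occur free in `u`). -/
inductive RootM : VTm → VTm → Prop
  | beta : RootM (app (lam t) u) (sub t u)
  | under : RootM (app t (shift 0 u)) s → RootM (app (sub t r) u) (sub s r)

/-- Exponential root rule `t[x←L⟨v⟩] ↦e L⟨t{x:=v}⟩` for an abstraction `v`. -/
inductive RootEAbs : VTm → VTm → Prop
  | beta : RootEAbs (sub t (lam u)) (subst t 0 (lam u))
  | under : RootEAbs (sub (shift 1 t) b) s → RootEAbs (sub t (sub b r)) (sub s r)

/-- Exponential root rule `t[x←L⟨v⟩] ↦e L⟨t{x:=v}⟩` for a variable `v`. -/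
inductive RootEVar : VTm → VTm → Prop
  | beta : RootEVar (sub t (var n)) (subst t 0 (var n))
  | under : RootEVar (sub (shift 1 t) b) s → RootEVar (sub t (sub b r)) (sub s r)

/-- Closure of a root rule under the weak evaluation contexts
`E ::= ⟨·⟩ | t E | E t | E[x←u] | t[x←E]`. -/
inductive Clo (R : VTm → VTm → Prop) : VTm → VTm → Prop
  | root : R t u → Clo R t u
  | appL : Clo R t t' → Clo R (app t u) (app t' u)
  | appR : Clo R u u' → Clo R (app t u) (app t u')
  | subL : Clo R t t' → Clo R (sub t u) (sub t' u)
  | subR : Clo R u u' → Clo R (sub t u) (sub t u')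

/-- Multiplicative reduction `→m`. -/
def StepM : VTm → VTm → Prop := Clo RootM
/-- Abstraction-exponential reduction `→eλ`. -/
def StepEAbs : VTm → VTm → Prop := Clo RootEAbs
/-- Variable-exponential reduction `→evar`. -/
def StepEVar : VTm → VTm → Prop := Clo RootEVar
/-- Exponential reduction `→e = →eλ ∪ →evar`. -/
def StepE (t u : VTm) : Prop := StepEAbs t u ∨ StepEVar t u
/-- vsub-reduction `→vsub = →m ∪ →e`. -/
def StepVsub (t u : VTm) : Prop := StepM t u ∨ StepE t u

/-- Swap the de Bruijn indices `k` and `k+1`. -/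
def swap (k : Nat) : VTm → VTm
  | var n => if n = k then var (k+1) else if n = k+1 then var k else var n
  | lam t => lam (swap (k+1) t)
  | app t u => app (swap k t) (swap k u)
  | sub t u => sub (swap (k+1) t) (swap k u)

/-- Structural equivalence `≡`: least equivalence relation closed under
evaluation contexts generated by the four permutation axioms for explicit
substitutions (the de Bruijn shifts/swaps implement the freshness side
conditions). -/
inductive SEq : VTm → VTm → Prop
  | com : SEq (sub (sub t (shift 0 s)) u) (sub (sub (swap 0 t) (shift 0 u)) s)
  | apR : SEq (app t (sub s u)) (sub (app (shift 0 t) s) u)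
  | apL : SEq (app (sub t u) s) (sub (app t (shift 0 s)) u)
  | es  : SEq (sub t (sub u s)) (sub (sub (shift 1 t) u) s)
  | refl : SEq t t
  | symm : SEq t u → SEq u t
  | trans : SEq t u → SEq u s → SEq t s
  | appL : SEq t t' → SEq (app t u) (app t' u)
  | appR : SEq u u' → SEq (app t u) (app t u')
  | subL : SEq t t' → SEq (sub t u) (sub t' u)
  | subR : SEq u u' → SEq (sub t u) (sub t u')

/-- Terms without explicit substitutions. -/
def NoES : VTm → Prop
  | var _ => True
  | lam t => NoES t
  | app t u => NoES t ∧ NoES u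
  | sub _ _ => False

theorem shift_shift : ∀ (t : VTm) (i j : Nat), i ≤ j →
    shift i (shift j t) = shift (j+1) (shift i t) := by
  intro t
  induction t with
  | var n =>
    intro i j h
    simp only [shift]
    split_ifs <;> simp only [shift] <;> split_ifs <;> first | rfl | omega
  | lam t ih => intro i j h; simp only [shift]; rw [ih _ _ (by omega)]
  | app t u iht ihu => intro i j h; simp only [shift]; rw [iht _ _ h, ihu _ _ h]
  | sub t u iht ihu => intro i j h; simp only [shift]; rw [iht _ _ (by omega), ihu _ _ h]

theorem shift_subst_lo : ∀ (t : VTm) (j k : Nat) (v : VTm), j ≤ k →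
    shift j (subst t k v) = subst (shift j t) (k+1) (shift j v) := by
  intro t
  induction t with
  | var n =>
    intro j k v h
    simp only [subst, shift]
    split_ifs <;> simp only [subst, shift] <;> split_ifs <;>
      first | rfl | omega | (congr 1; omega)
  | lam t ih =>
    intro j k v h
    simp only [subst, shift]
    rw [ih _ _ _ (by omega), shift_shift v 0 j (by omega)]
  | app t u iht ihu => intro j k v h; simp only [subst, shift]; rw [iht _ _ _ h, ihu _ _ _ h]
  | sub t u iht ihu =>
    intro j k v h
    simp only [subst, shift]
    rw [iht _ _ _ (by omega), ihu _ _ _ h, shift_shift v 0 j (by omega)]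

theorem shift_subst_hi : ∀ (t : VTm) (j k : Nat) (v : VTm), j ≤ k →
    shift k (subst t j v) = subst (shift (k+1) t) j (shift k v) := by
  intro t
  induction t with
  | var n =>
    intro j k v h
    simp only [subst, shift]
    split_ifs <;> simp only [subst, shift] <;> split_ifs <;>
      first | rfl | omega | (congr 1; omega)
  | lam t ih =>
    intro j k v h
    simp only [subst, shift]
    rw [ih _ _ _ (by omega), shift_shift v 0 k (by omega)]
  | app t u iht ihu => intro j k v h; simp only [subst, shift]; rw [iht _ _ _ h, ihu _ _ _ h]
  | sub t u iht ihu =>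
    intro j k v h
    simp only [subst, shift]
    rw [iht _ _ _ (by omega), ihu _ _ _ h, shift_shift v 0 k (by omega)]

theorem subst_shift_cancel : ∀ (t : VTm) (j : Nat) (v : VTm),
    subst (shift j t) j v = t := by
  intro t
  induction t with
  | var n =>
    intro j v
    simp only [shift]
    split_ifs <;> simp only [subst] <;> split_ifs <;> first | rfl | omega | (congr 1; omega)
  | lam t ih => intro j v; simp only [shift, subst]; rw [ih]
  | app t u iht ihu => intro j v; simp only [shift, subst]; rw [iht, ihu]
  | sub t u iht ihu => intro j v; simp only [shift, subst]; rw [iht, ihu]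

theorem subst_subst : ∀ (t : VTm) (i k : Nat) (w v : VTm), i ≤ k →
    subst (subst t i w) k v = subst (subst t (k+1) (shift i v)) i (subst w k v) := by
  intro t
  induction t with
  | var n =>
    intro i k w v h
    simp only [subst]
    split_ifs <;> (try simp only [subst]) <;> (try split_ifs) <;>
      first | rfl | (exfalso; omega) | (congr 1; omega) | (rw [subst_shift_cancel])
  | lam t ih =>
    intro i k w v h
    simp only [subst]
    rw [ih _ _ _ _ (by omega), shift_shift v 0 i (by omega),
        shift_subst_lo w 0 k v (by omega)]
  | app t u iht ihu => intro i k w v h; simp only [subst]; rw [iht _ _ _ _ h, ihu _ _ _ _ h]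
  | sub t u iht ihu =>
    intro i k w v h
    simp only [subst]
    rw [iht _ _ _ _ (by omega), ihu _ _ _ _ h, shift_shift v 0 i (by omega),
        shift_subst_lo w 0 k v (by omega)]


def RootE (a b : VTm) : Prop := RootEAbs a b ∨ RootEVar a b

def LamOrVar (v : VTm) : Prop := (∃ u, v = lam u) ∨ (∃ n, v = var n)

theorem LamOrVar.shift (h : LamOrVar v) (k : Nat) : LamOrVar (shift k v) := by
  rcases h with ⟨u, rfl⟩ | ⟨n, rfl⟩
  · exact Or.inl ⟨_, rfl⟩
  · right; simp only [VTm.shift]; split_ifs <;> exact ⟨_, rfl⟩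

theorem rootM_shift (h : RootM a b) : ∀ k, RootM (shift k a) (shift k b) := by
  induction h with
  | beta => intro k; exact RootM.beta
  | @under t u s r _ ih =>
    intro k
    simp only [VTm.shift]
    apply RootM.under
    have := ih (k+1)
    simpa only [VTm.shift, shift_shift u 0 k (Nat.zero_le _)] using this

theorem rootEAbs_shift (h : RootEAbs a b) : ∀ k, RootEAbs (shift k a) (shift k b) := by
  induction h with
  | @beta t u =>
    intro k
    simp only [VTm.shift]
    have : shift k (subst t 0 (lam u)) = subst (shift (k+1) t) 0 (lam (shift (k+1) u)) := by
      rw [shift_subst_hi t 0 k _ (Nat.zero_le _)]; rfl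
    rw [show VTm.lam (shift (k+1) u) = shift k (lam u) from rfl]
    rw [shift_subst_hi t 0 k _ (Nat.zero_le _)]
    exact RootEAbs.beta
  | @under t b s r _ ih =>
    intro k
    simp only [VTm.shift]
    apply RootEAbs.under
    have := ih (k+1)
    simpa only [VTm.shift, shift_shift t 1 (k+1) (by omega)] using this

theorem rootEVar_shift (h : RootEVar a b) : ∀ k, RootEVar (shift k a) (shift k b) := by
  induction h with
  | @beta t n =>
    intro k
    simp only [VTm.shift]
    rw [shift_subst_hi t 0 k _ (Nat.zero_le _)]
    simp only [VTm.shift]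
    split_ifs <;> exact RootEVar.beta
  | @under t b s r _ ih =>
    intro k
    simp only [VTm.shift]
    apply RootEVar.under
    have := ih (k+1)
    simpa only [VTm.shift, shift_shift t 1 (k+1) (by omega)] using this

theorem rootE_shift (h : RootE a b) (k : Nat) : RootE (shift k a) (shift k b) :=
  h.elim (fun h => Or.inl (rootEAbs_shift h k)) (fun h => Or.inr (rootEVar_shift h k))

theorem rootEAbs_subst (h : RootEAbs p q) :
    ∀ k v, LamOrVar v → RootEAbs (subst p k v) (subst q k v) := by
  induction h with
  | @beta t u =>
    intro k v hv
    simp only [VTm.subst]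
    rw [subst_subst t 0 k (lam u) v (Nat.zero_le _)]
    simp only [VTm.subst]
    exact RootEAbs.beta
  | @under t b s r _ ih =>
    intro k v hv
    simp only [VTm.subst]
    apply RootEAbs.under
    have := ih (k+1) (shift 0 v) (hv.shift 0)
    simp only [VTm.subst] at this
    rw [shift_shift v 0 0 (le_refl _),
        ← shift_subst_lo t 1 (k+1) (shift 0 v) (by omega)] at this
    exact this

theorem rootEVar_subst (h : RootEVar p q) :
    ∀ k v, LamOrVar v → RootE (subst p k v) (subst q k v) := by
  induction h with
  | @beta t n =>
    intro k v hv
    simp only [VTm.subst]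
    rw [subst_subst t 0 k (var n) v (Nat.zero_le _)]
    by_cases hnk : n = k
    · simp only [VTm.subst, if_pos hnk]
      rcases hv with ⟨u, rfl⟩ | ⟨m, rfl⟩
      · exact Or.inl RootEAbs.beta
      · exact Or.inr RootEVar.beta
    · simp only [VTm.subst, if_neg hnk]
      split_ifs <;> exact Or.inr RootEVar.beta
  | @under t b s r _ ih =>
    intro k v hv
    simp only [VTm.subst]
    have := ih (k+1) (shift 0 v) (hv.shift 0)
    simp only [VTm.subst] at this
    rw [shift_shift v 0 0 (le_refl _),
        ← shift_subst_lo t 1 (k+1) (shift 0 v) (by omega)] at this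
    exact this.elim (fun h => Or.inl (RootEAbs.under h)) (fun h => Or.inr (RootEVar.under h))

theorem rootE_subst (h : RootE p q) (k : Nat) (v : VTm) (hv : LamOrVar v) :
    RootE (subst p k v) (subst q k v) :=
  h.elim (fun h => Or.inl (rootEAbs_subst h k v hv)) (fun h => rootEVar_subst h k v hv)


theorem clo_mono {R S : VTm → VTm → Prop} (hRS : ∀ a b, R a b → S a b) :
    ∀ {t u}, Clo R t u → Clo S t u := by
  intro t u h
  induction h with
  | root h => exact Clo.root (hRS _ _ h)
  | appL _ ih => exact Clo.appL ih
  | appR _ ih => exact Clo.appR ih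
  | subL _ ih => exact Clo.subL ih
  | subR _ ih => exact Clo.subR ih

theorem clo_shift {R : VTm → VTm → Prop}
    (hR : ∀ a b, R a b → ∀ k, R (shift k a) (shift k b)) :
    ∀ {t u}, Clo R t u → ∀ k, Clo R (shift k t) (shift k u) := by
  intro t u h
  induction h with
  | root h => exact fun k => Clo.root (hR _ _ h k)
  | appL _ ih => exact fun k => Clo.appL (ih k)
  | appR _ ih => exact fun k => Clo.appR (ih k)
  | subL _ ih => exact fun k => Clo.subL (ih (k+1))
  | subR _ ih => exact fun k => Clo.subR (ih k)

theorem clo_subst {R : VTm → VTm → Prop}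
    (hR : ∀ a b, R a b → ∀ k v, LamOrVar v → R (subst a k v) (subst b k v)) :
    ∀ {t u}, Clo R t u → ∀ k v, LamOrVar v → Clo R (subst t k v) (subst u k v) := by
  intro t u h
  induction h with
  | root h => exact fun k v hv => Clo.root (hR _ _ h k v hv)
  | appL _ ih => exact fun k v hv => Clo.appL (ih k v hv)
  | appR _ ih => exact fun k v hv => Clo.appR (ih k v hv)
  | subL _ ih => exact fun k v hv => Clo.subL (ih (k+1) (shift 0 v) (hv.shift 0))
  | subR _ ih => exact fun k v hv => Clo.subR (ih k v hv)

theorem rootE_under (h : RootE (sub (shift 1 t) b) s) :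
    RootE (sub t (sub b r)) (sub s r) :=
  h.elim (fun h => Or.inl (RootEAbs.under h)) (fun h => Or.inr (RootEVar.under h))

theorem not_rootE_lam (h : RootE (lam t) c) : False := by
  rcases h with h | h <;> cases h

theorem not_rootE_var (h : RootE (var n) c) : False := by
  rcases h with h | h <;> cases h

theorem not_cloE_lam (h : Clo RootE (lam t) c) : False := by
  cases h with | root h => exact not_rootE_lam h

theorem not_cloE_var (h : Clo RootE (var n) c) : False := by
  cases h with | root h => exact not_rootE_var h

theorem not_cloM_lam (h : Clo RootM (lam t) c) : False := by
  cases h with | root h => cases h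

-- determinism
theorem rootM_det (h : RootM a b) : ∀ c, RootM a c → b = c := by
  induction h with
  | beta =>
    intro c hc
    cases hc with
    | beta => rfl
  | under h ih =>
    intro c hc
    cases hc with
    | under h2 => rw [ih _ h2]

theorem rootEAbs_det (h : RootEAbs a b) : ∀ c, RootEAbs a c → b = c := by
  induction h with
  | beta =>
    intro c hc
    cases hc with
    | beta => rfl
  | under h ih =>
    intro c hc
    cases hc with
    | under h2 => rw [ih _ h2]

theorem rootEVar_det (h : RootEVar a b) : ∀ c, RootEVar a c → b = c := by
  induction h with
  | beta =>
    intro c hc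
    cases hc with
    | beta => rfl
  | under h ih =>
    intro c hc
    cases hc with
    | under h2 => rw [ih _ h2]

theorem rootE_disj (h : RootEAbs a b) : ∀ c, RootEVar a c → False := by
  induction h with
  | beta =>
    intro c hc
    cases hc
  | under h ih =>
    intro c hc
    cases hc with
    | under h2 => exact ih _ h2

theorem rootE_det (h : RootE a b) (h2 : RootE a c) : b = c := by
  rcases h with h | h <;> rcases h2 with h2 | h2
  · exact rootEAbs_det h _ h2
  · exact absurd h2 (rootE_disj h _)
  · exact absurd h (rootE_disj h2 _)
  · exact rootEVar_det h _ h2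

-- commutation for M
theorem rootM_commL (h : RootM a B) : ∀ {A u A'}, a = app A u → Clo RootM A A' →
    ∃ B', RootM (app A' u) B' ∧ Clo RootM B B' := by
  induction h with
  | @beta t u0 =>
    intro A u A' heq hA
    cases heq
    exact absurd hA not_cloM_lam
  | @under t u0 s r h ih =>
    intro A u A' heq hA
    cases heq
    cases hA with
    | root h2 => cases h2
    | subL h2 =>
      obtain ⟨s', hs1, hs2⟩ := ih rfl h2
      exact ⟨sub s' r, RootM.under hs1, Clo.subL hs2⟩
    | @subR _ r' _ h2 =>
      exact ⟨sub s r', RootM.under h, Clo.subR h2⟩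

theorem rootM_commR (h : RootM a B) : ∀ {A u u'}, a = app A u → Clo RootM u u' →
    ∃ B', RootM (app A u') B' ∧ Clo RootM B B' := by
  induction h with
  | @beta t u0 =>
    intro A u u' heq hu
    cases heq
    exact ⟨sub t u', RootM.beta, Clo.subR hu⟩
  | @under t u0 s r h ih =>
    intro A u u' heq hu
    cases heq
    obtain ⟨s', hs1, hs2⟩ := ih rfl (clo_shift (fun a b h k => rootM_shift h k) hu 0)
    exact ⟨sub s' r, RootM.under hs1, Clo.subL hs2⟩

-- commutation for E, left component
theorem rootEAbs_commL (h : RootEAbs a s) : ∀ {t b t'}, a = sub t b → Clo RootE t t' →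
    ∃ s', RootE (sub t' b) s' ∧ Clo RootE s s' := by
  induction h with
  | @beta t0 u =>
    intro t b t' heq ht
    cases heq
    exact ⟨subst t' 0 (lam u), Or.inl RootEAbs.beta,
      clo_subst (fun a b h k v hv => rootE_subst h k v hv) ht 0 (lam u) (Or.inl ⟨u, rfl⟩)⟩
  | @under t0 b0 s0 r h ih =>
    intro t b t' heq ht
    cases heq
    obtain ⟨s0', hs1, hs2⟩ := ih rfl (clo_shift (fun a b h k => rootE_shift h k) ht 1)
    exact ⟨sub s0' r, rootE_under hs1, Clo.subL hs2⟩

theorem rootEVar_commL (h : RootEVar a s) : ∀ {t b t'}, a = sub t b → Clo RootE t t' →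
    ∃ s', RootE (sub t' b) s' ∧ Clo RootE s s' := by
  induction h with
  | @beta t0 n =>
    intro t b t' heq ht
    cases heq
    exact ⟨subst t' 0 (var n), Or.inr RootEVar.beta,
      clo_subst (fun a b h k v hv => rootE_subst h k v hv) ht 0 (var n) (Or.inr ⟨n, rfl⟩)⟩
  | @under t0 b0 s0 r h ih =>
    intro t b t' heq ht
    cases heq
    obtain ⟨s0', hs1, hs2⟩ := ih rfl (clo_shift (fun a b h k => rootE_shift h k) ht 1)
    exact ⟨sub s0' r, rootE_under hs1, Clo.subL hs2⟩

theorem rootE_commL (h : RootE (sub t b) s) (ht : Clo RootE t t') :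
    ∃ s', RootE (sub t' b) s' ∧ Clo RootE s s' :=
  h.elim (fun h => rootEAbs_commL h rfl ht) (fun h => rootEVar_commL h rfl ht)

-- the critical overlap
theorem hardAbs (hc : RootEAbs a2 c) : ∀ {t b r s0}, a2 = sub b r →
    RootE (sub (shift 1 t) b) s0 →
    ∃ p, RootE (sub s0 r) p ∧ RootE (sub t c) p := by
  induction hc with
  | @beta b0 u =>
    intro t b r s0 heq hP
    cases heq
    refine ⟨subst s0 0 (lam u), Or.inl RootEAbs.beta, ?_⟩
    have := rootE_subst hP 0 (lam u) (Or.inl ⟨u, rfl⟩)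
    simpa only [VTm.subst, subst_shift_cancel] using this
  | @under b0 b1 c0 r1 hC ih =>
    intro t b r s0 heq hP
    cases heq
    have hP2 : RootE (sub (shift 1 (shift 1 t)) (shift 1 b0)) (shift 1 s0) := by
      have := rootE_shift hP 1
      simpa only [VTm.shift, shift_shift t 1 1 (le_refl _)] using this
    obtain ⟨p0, h1, h2⟩ := ih rfl hP2
    exact ⟨sub p0 r1, rootE_under h1, rootE_under h2⟩

theorem hardVar (hc : RootEVar a2 c) : ∀ {t b r s0}, a2 = sub b r →
    RootE (sub (shift 1 t) b) s0 →
    ∃ p, RootE (sub s0 r) p ∧ RootE (sub t c) p := by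
  induction hc with
  | @beta b0 n =>
    intro t b r s0 heq hP
    cases heq
    refine ⟨subst s0 0 (var n), Or.inr RootEVar.beta, ?_⟩
    have := rootE_subst hP 0 (var n) (Or.inr ⟨n, rfl⟩)
    simpa only [VTm.subst, subst_shift_cancel] using this
  | @under b0 b1 c0 r1 hC ih =>
    intro t b r s0 heq hP
    cases heq
    have hP2 : RootE (sub (shift 1 (shift 1 t)) (shift 1 b0)) (shift 1 s0) := by
      have := rootE_shift hP 1
      simpa only [VTm.shift, shift_shift t 1 1 (le_refl _)] using this
    obtain ⟨p0, h1, h2⟩ := ih rfl hP2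
    exact ⟨sub p0 r1, rootE_under h1, rootE_under h2⟩

theorem hard (hP : RootE (sub (shift 1 t) b) s0) (hc : RootE (sub b r) c) :
    ∃ p, RootE (sub s0 r) p ∧ RootE (sub t c) p :=
  hc.elim (fun h => hardAbs h rfl hP) (fun h => hardVar h rfl hP)

-- commutation for E, right component
theorem rootEAbs_commR (h : RootEAbs a s) : ∀ {t b b'}, a = sub t b → Clo RootE b b' →
    ∃ s', RootE (sub t b') s' ∧ Clo RootE s s' := by
  induction h with
  | @beta t0 u =>
    intro t b b' heq hb
    cases heq
    exact absurd hb not_cloE_lam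
  | @under t0 b0 s0 r h ih =>
    intro t b b' heq hb
    cases heq
    cases hb with
    | root h2 =>
      obtain ⟨p, h3, h4⟩ := hard (Or.inl h) h2
      exact ⟨p, h4, Clo.root h3⟩
    | subL h2 =>
      obtain ⟨s0', h3, h4⟩ := ih rfl h2
      exact ⟨_, rootE_under h3, Clo.subL h4⟩
    | @subR _ r' _ h2 =>
      exact ⟨sub s0 r', rootE_under (Or.inl h), Clo.subR h2⟩

theorem rootEVar_commR (h : RootEVar a s) : ∀ {t b b'}, a = sub t b → Clo RootE b b' →
    ∃ s', RootE (sub t b') s' ∧ Clo RootE s s' := by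
  induction h with
  | @beta t0 n =>
    intro t b b' heq hb
    cases heq
    exact absurd hb not_cloE_var
  | @under t0 b0 s0 r h ih =>
    intro t b b' heq hb
    cases heq
    cases hb with
    | root h2 =>
      obtain ⟨p, h3, h4⟩ := hard (Or.inr h) h2
      exact ⟨p, h4, Clo.root h3⟩
    | subL h2 =>
      obtain ⟨s0', h3, h4⟩ := ih rfl h2
      exact ⟨_, rootE_under h3, Clo.subL h4⟩
    | @subR _ r' _ h2 =>
      exact ⟨sub s0 r', rootE_under (Or.inr h), Clo.subR h2⟩

theorem rootE_commR (h : RootE (sub t b) s) (hb : Clo RootE b b') :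
    ∃ s', RootE (sub t b') s' ∧ Clo RootE s s' :=
  h.elim (fun h => rootEAbs_commR h rfl hb) (fun h => rootEVar_commR h rfl hb)

-- diamond for M
theorem diamondM (h1 : Clo RootM a u) : ∀ {s}, Clo RootM a s →
    u = s ∨ ∃ p, Clo RootM u p ∧ Clo RootM s p := by
  induction h1 with
  | root h1 =>
    intro s h2
    cases h2 with
    | root h2 => exact Or.inl (rootM_det h1 _ h2)
    | appL h2 =>
      obtain ⟨B', hr, hc⟩ := rootM_commL h1 rfl h2
      exact Or.inr ⟨B', hc, Clo.root hr⟩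
    | appR h2 =>
      obtain ⟨B', hr, hc⟩ := rootM_commR h1 rfl h2
      exact Or.inr ⟨B', hc, Clo.root hr⟩
    | subL h2 => cases h1
    | subR h2 => cases h1
  | @appL t t' u0 h1 ih =>
    intro s h2
    cases h2 with
    | root h2 =>
      obtain ⟨B', hr, hc⟩ := rootM_commL h2 rfl h1
      exact Or.inr ⟨B', Clo.root hr, hc⟩
    | appL h2 =>
      rcases ih h2 with rfl | ⟨p, hp1, hp2⟩
      · exact Or.inl rfl
      · exact Or.inr ⟨app p u0, Clo.appL hp1, Clo.appL hp2⟩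
    | @appR _ u' _ h2 =>
      exact Or.inr ⟨app t' u', Clo.appR h2, Clo.appL h1⟩
  | @appR u0 u' t h1 ih =>
    intro s h2
    cases h2 with
    | root h2 =>
      obtain ⟨B', hr, hc⟩ := rootM_commR h2 rfl h1
      exact Or.inr ⟨B', Clo.root hr, hc⟩
    | @appL _ t' _ h2 =>
      exact Or.inr ⟨app t' u', Clo.appL h2, Clo.appR h1⟩
    | appR h2 =>
      rcases ih h2 with rfl | ⟨p, hp1, hp2⟩
      · exact Or.inl rfl
      · exact Or.inr ⟨app t p, Clo.appR hp1, Clo.appR hp2⟩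
  | @subL t t' u0 h1 ih =>
    intro s h2
    cases h2 with
    | root h2 => cases h2
    | subL h2 =>
      rcases ih h2 with rfl | ⟨p, hp1, hp2⟩
      · exact Or.inl rfl
      · exact Or.inr ⟨sub p u0, Clo.subL hp1, Clo.subL hp2⟩
    | @subR _ u' _ h2 =>
      exact Or.inr ⟨sub t' u', Clo.subR h2, Clo.subL h1⟩
  | @subR u0 u' t h1 ih =>
    intro s h2
    cases h2 with
    | root h2 => cases h2
    | @subL _ t' _ h2 =>
      exact Or.inr ⟨sub t' u', Clo.subL h2, Clo.subR h1⟩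
    | subR h2 =>
      rcases ih h2 with rfl | ⟨p, hp1, hp2⟩
      · exact Or.inl rfl
      · exact Or.inr ⟨sub t p, Clo.subR hp1, Clo.subR hp2⟩

theorem rootE_shape (h : RootE a b) : ∃ t u, a = sub t u := by
  rcases h with h | h <;> cases h <;> exact ⟨_, _, rfl⟩

-- diamond for E
theorem diamondE (h1 : Clo RootE a u) : ∀ {s}, Clo RootE a s →
    u = s ∨ ∃ p, Clo RootE u p ∧ Clo RootE s p := by
  induction h1 with
  | root h1 =>
    intro s h2
    cases h2 with
    | root h2 => exact Or.inl (rootE_det h1 h2)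
    | appL h2 => obtain ⟨t, u, h⟩ := rootE_shape h1; cases h
    | appR h2 => obtain ⟨t, u, h⟩ := rootE_shape h1; cases h
    | subL h2 =>
      obtain ⟨s', hr, hc⟩ := rootE_commL h1 h2
      exact Or.inr ⟨s', hc, Clo.root hr⟩
    | subR h2 =>
      obtain ⟨s', hr, hc⟩ := rootE_commR h1 h2
      exact Or.inr ⟨s', hc, Clo.root hr⟩
  | @appL t t' u0 h1 ih =>
    intro s h2
    cases h2 with
    | root h2 => obtain ⟨t0, u0', h⟩ := rootE_shape h2; cases h
    | appL h2 =>
      rcases ih h2 with rfl | ⟨p, hp1, hp2⟩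
      · exact Or.inl rfl
      · exact Or.inr ⟨app p u0, Clo.appL hp1, Clo.appL hp2⟩
    | @appR _ u' _ h2 =>
      exact Or.inr ⟨app t' u', Clo.appR h2, Clo.appL h1⟩
  | @appR u0 u' t h1 ih =>
    intro s h2
    cases h2 with
    | root h2 => obtain ⟨t0, u0', h⟩ := rootE_shape h2; cases h
    | @appL _ t' _ h2 =>
      exact Or.inr ⟨app t' u', Clo.appL h2, Clo.appR h1⟩
    | appR h2 =>
      rcases ih h2 with rfl | ⟨p, hp1, hp2⟩
      · exact Or.inl rfl
      · exact Or.inr ⟨app t p, Clo.appR hp1, Clo.appR hp2⟩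
  | @subL t t' u0 h1 ih =>
    intro s h2
    cases h2 with
    | root h2 =>
      obtain ⟨s', hr, hc⟩ := rootE_commL h2 h1
      exact Or.inr ⟨s', Clo.root hr, hc⟩
    | subL h2 =>
      rcases ih h2 with rfl | ⟨p, hp1, hp2⟩
      · exact Or.inl rfl
      · exact Or.inr ⟨sub p u0, Clo.subL hp1, Clo.subL hp2⟩
    | @subR _ u' _ h2 =>
      exact Or.inr ⟨sub t' u', Clo.subR h2, Clo.subL h1⟩
  | @subR u0 u' t h1 ih =>
    intro s h2
    cases h2 with
    | root h2 =>
      obtain ⟨s', hr, hc⟩ := rootE_commR h2 h1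
      exact Or.inr ⟨s', Clo.root hr, hc⟩
    | @subL _ t' _ h2 =>
      exact Or.inr ⟨sub t' u', Clo.subL h2, Clo.subR h1⟩
    | subR h2 =>
      rcases ih h2 with rfl | ⟨p, hp1, hp2⟩
      · exact Or.inl rfl
      · exact Or.inr ⟨sub t p, Clo.subR hp1, Clo.subR hp2⟩


theorem cloE_split (h : Clo RootE t u) : Clo RootEAbs t u ∨ Clo RootEVar t u := by
  induction h with
  | root h => exact h.elim (fun h => Or.inl (Clo.root h)) (fun h => Or.inr (Clo.root h))
  | appL _ ih => exact ih.elim (fun h => Or.inl (Clo.appL h)) (fun h => Or.inr (Clo.appL h))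
  | appR _ ih => exact ih.elim (fun h => Or.inl (Clo.appR h)) (fun h => Or.inr (Clo.appR h))
  | subL _ ih => exact ih.elim (fun h => Or.inl (Clo.subL h)) (fun h => Or.inr (Clo.subL h))
  | subR _ ih => exact ih.elim (fun h => Or.inl (Clo.subR h)) (fun h => Or.inr (Clo.subR h))

theorem stepE_iff : StepE t u ↔ Clo RootE t u :=
  ⟨fun h => h.elim (fun h => clo_mono (fun _ _ => Or.inl) h)
      (fun h => clo_mono (fun _ _ => Or.inr) h),
   fun h => cloE_split h⟩

end VTm
open VTm

/-- `→m` and `→e` are each strongly confluent. -/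
theorem m_and_e_strongly_confluent :
    (∀ t u s : VTm, StepM t u → StepM t s → u ≠ s →
      ∃ p, StepM u p ∧ StepM s p) ∧
    (∀ t u s : VTm, StepE t u → StepE t s → u ≠ s →
      ∃ p, StepE u p ∧ StepE s p) := by
  constructor
  · intro t u s h1 h2 hne
    rcases diamondM h1 h2 with rfl | ⟨p, hp1, hp2⟩
    · exact absurd rfl hne
    · exact ⟨p, hp1, hp2⟩
  · intro t u s h1 h2 hne
    rcases diamondE (stepE_iff.mp h1) (stepE_iff.mp h2) with rfl | ⟨p, hp1, hp2⟩
    · exact absurd rfl hne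
    · exact ⟨p, stepE_iff.mpr hp1, stepE_iff.mpr hp2⟩
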